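/- Let x, x₋, x̄₊ be centered, square-integrable ℝⁿ-valued random vectors with E[x xᵀ] = I, and set P₋ = E[x₋ x₋ᵀ], P̄₊ = E[x̄₊ x̄₊ᵀ], Q₋ = I − P₋, Q̄₊ = I − P̄₊, all assumed invertible. Assume E[x x₋ᵀ] = P₋, E[x x̄₊ᵀ] = P̄₊, and E[x̄₊ x₋ᵀ] = P̄₊ P₋. Define x̂ = Q (Q₋^{-1} x₋ + Q̄₊^{-1} x̄₊) with Q = (Q₋^{-1} + Q̄₊^{-1} − I)^{-1} (assumed to exist). Then E[(x − x̂) x₋ᵀ] = 0 and E[(x − x̂) x̄₊ᵀ] = 0. -/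

import Mathlib

open Matrix MeasureTheory

/-- Cross-covariance matrix E[x yᵀ] of two (centered) random vectors. -/
noncomputable def cov {Ω : Type*} [MeasurableSpace Ω] (ℙ : Measure Ω) {n m : ℕ}
    (x : Ω → Fin n → ℝ) (y : Ω → Fin m → ℝ) : Matrix (Fin n) (Fin m) ℝ :=
  Matrix.of fun i j => ∫ ω, x ω i * y ω j ∂ℙ

/-! Covariances are linear in the left argument, so `E[x̂ x₋ᵀ] = Q (Q₋⁻¹ P₋ + Q̄₊⁻¹ P̄₊ P₋)`.
Since `Q̄₊⁻¹ P̄₊ = Q̄₊⁻¹ - 1`, the bracket equals `(Q₋⁻¹ + Q̄₊⁻¹ - 1) P₋ = Q⁻¹ P₋`, whence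
`E[x̂ x₋ᵀ] = P₋ = E[x x₋ᵀ]`. The estimate is symmetric in `x₋, x̄₊`, and transposing the
hypothesis `E[x̄₊ x₋ᵀ] = P̄₊ P₋` gives `E[x₋ x̄₊ᵀ] = P₋ P̄₊`, so the same computation gives
`E[x̂ x̄₊ᵀ] = P̄₊ = E[x x̄₊ᵀ]`. -/

section Covariance

variable {Ω : Type*} [MeasurableSpace Ω] {ℙ : Measure Ω} {k n m : ℕ}

lemma transpose_cov (x : Ω → Fin n → ℝ) (y : Ω → Fin m → ℝ) :
    (cov ℙ x y)ᵀ = cov ℙ y x := by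
  ext i j
  simp only [cov, transpose_apply, of_apply, mul_comm]

lemma memLp_mulVec (A : Matrix (Fin k) (Fin n) ℝ) {v : Ω → Fin n → ℝ}
    (hv : ∀ j, MemLp (fun ω => v ω j) 2 ℙ) (i : Fin k) :
    MemLp (fun ω => (A *ᵥ v ω) i) 2 ℙ :=
  memLp_finsetSum Finset.univ fun j _ => (hv j).const_mul (A i j)

lemma integrable_mul_of_memLp_two {x : Ω → Fin n → ℝ} {y : Ω → Fin m → ℝ}
    (hx : ∀ i, MemLp (fun ω => x ω i) 2 ℙ) (hy : ∀ j, MemLp (fun ω => y ω j) 2 ℙ)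
    (i : Fin n) (j : Fin m) : Integrable (fun ω => x ω i * y ω j) ℙ :=
  (hx i).integrable_mul (hy j)

lemma cov_add_left {a b : Ω → Fin n → ℝ} {y : Ω → Fin m → ℝ}
    (ha : ∀ i, MemLp (fun ω => a ω i) 2 ℙ) (hb : ∀ i, MemLp (fun ω => b ω i) 2 ℙ)
    (hy : ∀ j, MemLp (fun ω => y ω j) 2 ℙ) :
    cov ℙ (fun ω => a ω + b ω) y = cov ℙ a y + cov ℙ b y := by
  ext i j
  simp only [cov, Matrix.add_apply, of_apply, Pi.add_apply, add_mul]
  exact integral_add (integrable_mul_of_memLp_two ha hy i j)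
    (integrable_mul_of_memLp_two hb hy i j)

lemma cov_sub_left {a b : Ω → Fin n → ℝ} {y : Ω → Fin m → ℝ}
    (ha : ∀ i, MemLp (fun ω => a ω i) 2 ℙ) (hb : ∀ i, MemLp (fun ω => b ω i) 2 ℙ)
    (hy : ∀ j, MemLp (fun ω => y ω j) 2 ℙ) :
    cov ℙ (fun ω => a ω - b ω) y = cov ℙ a y - cov ℙ b y := by
  ext i j
  simp only [cov, Matrix.sub_apply, of_apply, Pi.sub_apply, sub_mul]
  exact integral_sub (integrable_mul_of_memLp_two ha hy i j)
    (integrable_mul_of_memLp_two hb hy i j)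

lemma cov_mulVec_left (A : Matrix (Fin k) (Fin n) ℝ) {v : Ω → Fin n → ℝ}
    {y : Ω → Fin m → ℝ} (hv : ∀ i, MemLp (fun ω => v ω i) 2 ℙ)
    (hy : ∀ j, MemLp (fun ω => y ω j) 2 ℙ) :
    cov ℙ (fun ω => A *ᵥ v ω) y = A * cov ℙ v y := by
  ext i j
  simp only [cov, of_apply, mul_apply, mulVec, dotProduct, Finset.sum_mul, mul_assoc]
  rw [integral_finsetSum _ fun l _ => (integrable_mul_of_memLp_two hv hy l j).const_mul _]
  exact Finset.sum_congr rfl fun l _ => integral_const_mul _ _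

end Covariance

section InformationFusion

variable {R : Type*} [CommRing R] {ι : Type*} [Fintype ι] [DecidableEq ι]

lemma inv_one_sub_mul_self {P : Matrix ι ι R} (hP : IsUnit (1 - P).det) :
    (1 - P)⁻¹ * P = (1 - P)⁻¹ - 1 := by
  calc (1 - P)⁻¹ * P = (1 - P)⁻¹ * (1 - (1 - P)) := by rw [sub_sub_cancel]
    _ = (1 - P)⁻¹ - 1 := by rw [Matrix.mul_sub, Matrix.mul_one, nonsing_inv_mul _ hP]

lemma inv_one_sub_add_inv_one_sub_sub_one_mul (P : Matrix ι ι R) {P' : Matrix ι ι R}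
    (hP' : IsUnit (1 - P').det) :
    ((1 - P)⁻¹ + (1 - P')⁻¹ - 1) * P = (1 - P)⁻¹ * P + (1 - P')⁻¹ * (P' * P) := by
  rw [← Matrix.mul_assoc, inv_one_sub_mul_self hP']
  noncomm_ring

end InformationFusion

section TwoFilter

variable {Ω : Type*} [MeasurableSpace Ω] {ℙ : Measure Ω} {n : ℕ}

noncomputable def twoFilterEstimate (ℙ : Measure Ω) (xm xbp : Ω → Fin n → ℝ) :
    Ω → Fin n → ℝ :=
  fun ω => ((1 - cov ℙ xm xm)⁻¹ + (1 - cov ℙ xbp xbp)⁻¹ - 1)⁻¹ *ᵥ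
    ((1 - cov ℙ xm xm)⁻¹ *ᵥ xm ω + (1 - cov ℙ xbp xbp)⁻¹ *ᵥ xbp ω)

lemma twoFilterEstimate_comm (xm xbp : Ω → Fin n → ℝ) :
    twoFilterEstimate ℙ xm xbp = twoFilterEstimate ℙ xbp xm := by
  funext ω
  simp only [twoFilterEstimate, add_comm (1 - cov ℙ xm xm)⁻¹,
    add_comm ((1 - cov ℙ xm xm)⁻¹ *ᵥ xm ω)]

lemma memLp_twoFilterEstimate {xm xbp : Ω → Fin n → ℝ}
    (hxm : ∀ i, MemLp (fun ω => xm ω i) 2 ℙ) (hxbp : ∀ i, MemLp (fun ω => xbp ω i) 2 ℙ)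
    (i : Fin n) : MemLp (fun ω => twoFilterEstimate ℙ xm xbp ω i) 2 ℙ :=
  memLp_mulVec _ (fun j => (memLp_mulVec _ hxm j).add (memLp_mulVec _ hxbp j)) i

lemma cov_twoFilterEstimate_left {xm xbp : Ω → Fin n → ℝ}
    (hxm : ∀ i, MemLp (fun ω => xm ω i) 2 ℙ) (hxbp : ∀ i, MemLp (fun ω => xbp ω i) 2 ℙ)
    (hQbp : IsUnit (1 - cov ℙ xbp xbp).det)
    (hQ : IsUnit ((1 - cov ℙ xm xm)⁻¹ + (1 - cov ℙ xbp xbp)⁻¹ - 1).det)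
    (hcross : cov ℙ xbp xm = cov ℙ xbp xbp * cov ℙ xm xm) :
    cov ℙ (twoFilterEstimate ℙ xm xbp) xm = cov ℙ xm xm := by
  have hsum : ∀ i, MemLp (fun ω =>
      ((1 - cov ℙ xm xm)⁻¹ *ᵥ xm ω + (1 - cov ℙ xbp xbp)⁻¹ *ᵥ xbp ω : Fin n → ℝ) i) 2 ℙ :=
    fun i => (memLp_mulVec _ hxm i).add (memLp_mulVec _ hxbp i)
  unfold twoFilterEstimate
  rw [cov_mulVec_left _ hsum hxm,
    cov_add_left (memLp_mulVec _ hxm) (memLp_mulVec _ hxbp) hxm,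
    cov_mulVec_left _ hxm hxm, cov_mulVec_left _ hxbp hxm, hcross,
    ← inv_one_sub_add_inv_one_sub_sub_one_mul _ hQbp, ← Matrix.mul_assoc,
    nonsing_inv_mul _ hQ, Matrix.one_mul]

end TwoFilter

theorem stmt_10_general {Ω : Type*} [MeasurableSpace Ω] (ℙ : Measure Ω)
    {n : ℕ} (x xm xbp xhat : Ω → Fin n → ℝ)
    (hx2 : ∀ i, MemLp (fun ω => x ω i) 2 ℙ)
    (hxm2 : ∀ i, MemLp (fun ω => xm ω i) 2 ℙ)
    (hxbp2 : ∀ i, MemLp (fun ω => xbp ω i) 2 ℙ)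
    (Qm Qbp Q : Matrix (Fin n) (Fin n) ℝ)
    (hQm : Qm = 1 - cov ℙ xm xm) (hQbp : Qbp = 1 - cov ℙ xbp xbp)
    (hQminv : IsUnit Qm.det) (hQbpinv : IsUnit Qbp.det)
    (hcross1 : cov ℙ x xm = cov ℙ xm xm)
    (hcross2 : cov ℙ x xbp = cov ℙ xbp xbp)
    (hcross3 : cov ℙ xbp xm = cov ℙ xbp xbp * cov ℙ xm xm)
    (hQinv : IsUnit (Qm⁻¹ + Qbp⁻¹ - 1).det)
    (hQ : Q = (Qm⁻¹ + Qbp⁻¹ - 1)⁻¹)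
    (hxhat : xhat = fun ω => Q.mulVec (Qm⁻¹.mulVec (xm ω) + Qbp⁻¹.mulVec (xbp ω))) :
    cov ℙ (fun ω => x ω - xhat ω) xm = 0 ∧ cov ℙ (fun ω => x ω - xhat ω) xbp = 0 := by
  subst hQm hQbp hQ
  change xhat = twoFilterEstimate ℙ xm xbp at hxhat
  subst hxhat
  have hxhat2 := memLp_twoFilterEstimate hxm2 hxbp2
  have hcross3_symm : cov ℙ xm xbp = cov ℙ xm xm * cov ℙ xbp xbp := by
    rw [← transpose_cov, hcross3, transpose_mul, transpose_cov, transpose_cov]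
  rw [cov_sub_left hx2 hxhat2 hxm2, cov_sub_left hx2 hxhat2 hxbp2,
    cov_twoFilterEstimate_left hxm2 hxbp2 hQbpinv hQinv hcross3, twoFilterEstimate_comm,
    cov_twoFilterEstimate_left hxbp2 hxm2 hQminv (by rwa [add_comm (1 - cov ℙ xbp xbp)⁻¹])
      hcross3_symm, hcross1, hcross2]
  exact ⟨sub_self _, sub_self _⟩

theorem stmt_10 {Ω : Type*} [MeasurableSpace Ω] (ℙ : Measure Ω) [IsProbabilityMeasure ℙ]
    {n : ℕ} (x xm xbp xhat : Ω → Fin n → ℝ)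
    (hx2 : ∀ i, MemLp (fun ω => x ω i) 2 ℙ)
    (hxm2 : ∀ i, MemLp (fun ω => xm ω i) 2 ℙ)
    (hxbp2 : ∀ i, MemLp (fun ω => xbp ω i) 2 ℙ)
    (hx0 : ∀ i, ∫ ω, x ω i ∂ℙ = 0)
    (hxm0 : ∀ i, ∫ ω, xm ω i ∂ℙ = 0)
    (hxbp0 : ∀ i, ∫ ω, xbp ω i ∂ℙ = 0)
    (hnorm : cov ℙ x x = 1)
    (Qm Qbp Q : Matrix (Fin n) (Fin n) ℝ)
    (hQm : Qm = 1 - cov ℙ xm xm) (hQbp : Qbp = 1 - cov ℙ xbp xbp)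
    (hQminv : IsUnit Qm.det) (hQbpinv : IsUnit Qbp.det)
    (hcross1 : cov ℙ x xm = cov ℙ xm xm)
    (hcross2 : cov ℙ x xbp = cov ℙ xbp xbp)
    (hcross3 : cov ℙ xbp xm = cov ℙ xbp xbp * cov ℙ xm xm)
    (hQinv : IsUnit (Qm⁻¹ + Qbp⁻¹ - 1).det)
    (hQ : Q = (Qm⁻¹ + Qbp⁻¹ - 1)⁻¹)
    (hxhat : xhat = fun ω => Q.mulVec (Qm⁻¹.mulVec (xm ω) + Qbp⁻¹.mulVec (xbp ω))) :
    cov ℙ (fun ω => x ω - xhat ω) xm = 0 ∧ cov ℙ (fun ω => x ω - xhat ω) xbp = 0 :=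
  stmt_10_general ℙ x xm xbp xhat hx2 hxm2 hxbp2 Qm Qbp Q hQm hQbp hQminv hQbpinv hcross1 hcross2
    hcross3 hQinv hQ hxhat
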